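/- Let G be a simple graph admitting a strong integer additive set-indexer f, and let v be a vertex of G of degree 2 whose two neighbours u and w are non-adjacent in G. Let G' be the graph obtained from G by deleting the vertex v and adding the edge uw (an elementary topological reduction). Then the restriction of f to the vertices of G' satisfies the strong condition |f(u') + f(v')| = |f(u')| · |f(v')| on every edge u'v' of G' if and only if the difference sets D_{f(u)} and D_{f(w)} are disjoint, where D_A denotes the set of positive differences between elements of A. -/

import Mathlib

open Pointwise

/-- The difference set of a finite set `A` of non-negative integers:
the set of positive differences `a - a'` with `a, a' ∈ A`, `a > a'`. -/
def diffSet (A : Finset ℕ) : Finset ℕ :=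
  ((A ×ˢ A).filter fun p => p.2 < p.1).image fun p => p.1 - p.2

/-- `f` is an integer additive set-indexer (IASI) of the simple graph `G`:
`f` is injective, assigns nonempty finite sets of non-negative integers to vertices,
and the induced edge function `f⁺(uv) = f(u) + f(v)` is injective on edges. -/
def IsIASI {V : Type*} (G : SimpleGraph V) (f : V → Finset ℕ) : Prop :=
  Function.Injective f ∧ (∀ v, (f v).Nonempty) ∧
    ∀ ⦃u v u' v' : V⦄, G.Adj u v → G.Adj u' v' →
      f u + f v = f u' + f v' → s(u, v) = s(u', v')

/-- A strong IASI: `|f⁺(uv)| = |f(u)| * |f(v)|` for all edges `uv`. -/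
def IsStrongIASI {V : Type*} (G : SimpleGraph V) (f : V → Finset ℕ) : Prop :=
  IsIASI G f ∧ ∀ ⦃u v : V⦄, G.Adj u v → (f u + f v).card = (f u).card * (f v).card

/-- A strongly `k`-uniform IASI: `|f⁺(uv)| = |f(u)| * |f(v)| = k` for all edges `uv`. -/
def IsStronglyUniformIASI {V : Type*} (G : SimpleGraph V) (f : V → Finset ℕ) (k : ℕ) : Prop :=
  IsStrongIASI G f ∧ ∀ ⦃u v : V⦄, G.Adj u v → (f u + f v).card = k

/-- A weakly `k`-uniform IASI: `|f⁺(uv)| = max(|f(u)|, |f(v)|) = k` for all edges `uv`. -/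
def IsWeaklyUniformIASI {V : Type*} (G : SimpleGraph V) (f : V → Finset ℕ) (k : ℕ) : Prop :=
  IsIASI G f ∧ ∀ ⦃u v : V⦄, G.Adj u v →
    (f u + f v).card = max (f u).card (f v).card ∧ (f u + f v).card = k

/-!
The sumset `A + B` is the image of `A × B` under addition, so `|A + B| = |A| · |B|` exactly
when addition is injective on `A × B`; a collision `a + b = a' + b'` with `a' < a` is the same
thing as a common positive difference `a - a' = b' - b`. The reduced graph has the edges of `G`,
on which `f` is strong by hypothesis, plus the single new edge `uw`.
-/

lemma mem_diffSet {A : Finset ℕ} {d : ℕ} :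
    d ∈ diffSet A ↔ ∃ a ∈ A, ∃ a' ∈ A, a' < a ∧ a - a' = d := by
  simp only [diffSet, Finset.mem_image, Finset.mem_filter, Finset.mem_product, Prod.exists]
  tauto

lemma sub_mem_diffSet {A : Finset ℕ} {a a' : ℕ} (ha : a ∈ A) (ha' : a' ∈ A) (h : a' < a) :
    a - a' ∈ diffSet A :=
  mem_diffSet.2 ⟨a, ha, a', ha', h, rfl⟩

lemma disjoint_diffSet_iff {A B : Finset ℕ} :
    Disjoint (diffSet A) (diffSet B) ↔
      ∀ a ∈ A, ∀ a' ∈ A, ∀ b ∈ B, ∀ b' ∈ B, a' < a → a + b ≠ a' + b' := by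
  refine ⟨fun h a ha a' ha' b hb b' hb' hlt hsum => ?_, fun h => ?_⟩
  · exact Finset.disjoint_left.1 h (sub_mem_diffSet ha ha' hlt)
      (by convert sub_mem_diffSet hb' hb (by omega) using 1; omega)
  · refine Finset.disjoint_left.2 fun d hdA hdB => ?_
    obtain ⟨a, ha, a', ha', hlt, rfl⟩ := mem_diffSet.1 hdA
    obtain ⟨b, hb, b', hb', hlt', hd⟩ := mem_diffSet.1 hdB
    exact h a ha a' ha' b' hb' b hb hlt (by omega)

lemma injOn_add_iff_disjoint_diffSet {A B : Finset ℕ} :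
    (A ×ˢ B : Set (ℕ × ℕ)).InjOn (fun p => p.1 + p.2) ↔ Disjoint (diffSet A) (diffSet B) := by
  rw [disjoint_diffSet_iff]
  refine ⟨fun h a ha a' ha' b hb b' hb' hlt hsum => ?_, fun h p hp q hq hsum => ?_⟩
  · exact hlt.ne' (congrArg Prod.fst (h (Set.mk_mem_prod ha hb) (Set.mk_mem_prod ha' hb') hsum))
  · obtain ⟨hp₁, hp₂⟩ := hp
    obtain ⟨hq₁, hq₂⟩ := hq
    rcases lt_trichotomy p.1 q.1 with hlt | heq | hgt
    · exact absurd hsum.symm (h _ hq₁ _ hp₁ _ hq₂ _ hp₂ hlt)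
    · exact Prod.ext heq (by simp only at hsum; omega)
    · exact absurd hsum (h _ hp₁ _ hq₁ _ hp₂ _ hq₂ hgt)

theorem card_add_eq_mul_iff_disjoint_diffSet {A B : Finset ℕ} :
    (A + B).card = A.card * B.card ↔ Disjoint (diffSet A) (diffSet B) :=
  Finset.card_add_iff.trans injOn_add_iff_disjoint_diffSet

theorem topologicalReduction_strong_iff_disjoint_diffSets_general {V : Type*} (G : SimpleGraph V)
    (f : V → Finset ℕ) (hf : IsStrongIASI G f) (v u w : V) (huw : u ≠ w)
    (hnbr : G.neighborSet v = {u, w}) :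
    (∀ a b : ({x : V | x ≠ v} : Set V),
        ((G ⊔ SimpleGraph.fromEdgeSet {s(u, w)}).induce {x : V | x ≠ v}).Adj a b →
          (f ↑a + f ↑b).card = (f ↑a).card * (f ↑b).card) ↔
      Disjoint (diffSet (f u)) (diffSet (f w)) := by
  have hu : u ≠ v := (G.ne_of_adj (show u ∈ G.neighborSet v from hnbr ▸ by simp)).symm
  have hw : w ≠ v := (G.ne_of_adj (show w ∈ G.neighborSet v from hnbr ▸ by simp)).symm
  rw [← card_add_eq_mul_iff_disjoint_diffSet]
  refine ⟨fun h => h ⟨u, hu⟩ ⟨w, hw⟩ (by simp [huw]), fun huw_strong ⟨a, _⟩ ⟨b, _⟩ hab => ?_⟩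
  rw [SimpleGraph.induce_adj, ← SimpleGraph.edge, SimpleGraph.sup_adj, SimpleGraph.edge_adj] at hab
  rcases hab with hG | ⟨⟨rfl, rfl⟩ | ⟨rfl, rfl⟩, -⟩
  · exact hf.2 hG
  · exact huw_strong
  · rwa [add_comm, mul_comm]

/-- Let `f` be a strong IASI of `G`, and let `v` be a vertex of degree 2 whose
two neighbours `u`, `w` are non-adjacent.  Let `G'` be obtained from `G` by deleting `v`
and adding the edge `uw` (an elementary topological reduction).  Then the restriction of
`f` to the vertices of `G'` satisfies the strong condition on every edge of `G'` iff the
difference sets `D_{f(u)}` and `D_{f(w)}` are disjoint. -/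
theorem topologicalReduction_strong_iff_disjoint_diffSets {V : Type*} (G : SimpleGraph V)
    (f : V → Finset ℕ) (hf : IsStrongIASI G f) (v u w : V) (huw : u ≠ w)
    (hnbr : G.neighborSet v = {u, w}) (hnadj : ¬ G.Adj u w) :
    (∀ a b : ({x : V | x ≠ v} : Set V),
        ((G ⊔ SimpleGraph.fromEdgeSet {s(u, w)}).induce {x : V | x ≠ v}).Adj a b →
          (f ↑a + f ↑b).card = (f ↑a).card * (f ↑b).card) ↔
      Disjoint (diffSet (f u)) (diffSet (f w)) :=
  topologicalReduction_strong_iff_disjoint_diffSets_general G f hf v u w huw hnbr
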